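/- Let n ≥ 1 and let Φ_C = {±2e_i : 1 ≤ i ≤ n} ∪ {±e_j ± e_k : 1 ≤ j < k ≤ n} (all four sign combinations) be the set of roots of type C_n in ℝ^n, with dual lattice M = ℤ^n + ℤ·(1/2, …, 1/2). Let P ⊆ ℝ^n be a lattice polytope cut out by Φ_C: that is, P is the convex hull of a nonempty finite subset of M, and there exist a finite subset S ⊆ Φ_C and real numbers c_v (v ∈ S) with P = {x ∈ ℝ^n : ⟨x, v⟩ ≥ c_v for all v ∈ S}. Then P is normal: for every positive integer m, every point of M lying in the dilate m·P is a sum of m points of M ∩ P. -/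

import Mathlib

open Finset Pointwise

/-- The `i`-th standard basis vector of `ℝ^n`. -/
noncomputable def stdBasis (n : ℕ) (i : Fin n) : Fin n → ℝ := fun j => if j = i then 1 else 0

/-- The standard inner product on `ℝ^n`. -/
noncomputable def innerProd {n : ℕ} (u v : Fin n → ℝ) : ℝ := ∑ i, u i * v i

/-- The roots of type `C_n`: `±2e_i` and `±e_j ± e_k` for `j < k` (all four sign choices). -/
noncomputable def typeC (n : ℕ) : Set (Fin n → ℝ) :=
  {v | ∃ i, v = (2 : ℝ) • stdBasis n i ∨ v = -((2 : ℝ) • stdBasis n i)} ∪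
  {v | ∃ j k, j < k ∧ ∃ ε δ : ℝ, (ε = 1 ∨ ε = -1) ∧ (δ = 1 ∨ δ = -1) ∧
    v = ε • stdBasis n j + δ • stdBasis n k}

/-- The lattice `M = ℤ^n + ℤ·(1/2, …, 1/2) ⊆ ℝ^n`, the union of `ℤ^n` and its translate by
`(1/2, …, 1/2)`. -/
def halfLattice (n : ℕ) : Set (Fin n → ℝ) :=
  {u | (∀ i, ∃ m : ℤ, u i = m) ∨ (∀ i, ∃ m : ℤ, u i = m + 1/2)}

open scoped Matrix

/-!
Let `x` be a lattice point of `(k + 1) • P` and `q = x / (k + 1)`. Pick a vertex `u` of `P` that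
lies on every facet containing `q`, and round `q - u` coordinatewise to integers by an odd rounding
`r`; then `y = u + r (q - u)` is a lattice point at sup-distance `≤ 1/2` from `q`. Every root
`±e_i ± e_j` takes integer values on `M` and values in `[-1, 1]` on the cube of radius `1/2`, so the
inequalities of `P` that are strict at `q` hold at `y` (and those of `k • P` at `x - y`) by
integrality. The inequalities that are tight at `q` stay tight at `y`: they say `d_i = 0` or
`d_i = ± d_j` for `d = q - u`, and odd rounding preserves these relations. Hence `y ∈ P` and
`x - y ∈ k • P`, and induction on `k` finishes the proof.
-/

/-- Rounding to the nearest integer, with ties broken towards zero so that it is odd. -/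
noncomputable def oddRound (x : ℝ) : ℤ := if 0 ≤ x then round x else -round (-x)

lemma oddRound_neg (x : ℝ) : oddRound (-x) = -oddRound x := by
  rcases lt_trichotomy x 0 with h | rfl | h
  · simp [oddRound, h.le, h.not_ge]
  · simp [oddRound]
  · simp [oddRound, h.le, h.not_ge]

lemma abs_oddRound_sub_le (x : ℝ) : |(oddRound x : ℝ) - x| ≤ 1 / 2 := by
  unfold oddRound
  split_ifs
  · rw [abs_sub_comm]
    exact abs_sub_round x
  · rw [Int.cast_neg, neg_sub_comm]
    exact abs_sub_round (-x)

lemma intCast_le_of_sub_one_lt {a : ℤ} {t : ℝ} (ht : ∃ z : ℤ, t = z) (h : (a : ℝ) - 1 < t) :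
    (a : ℝ) ≤ t := by
  obtain ⟨z, rfl⟩ := ht
  exact_mod_cast Int.sub_one_lt_iff.mp (by exact_mod_cast h)

lemma exists_mem_forall_eq_of_mem_convexHull {E : Type*} [AddCommGroup E] [Module ℝ E]
    {V : Set E} (hV : V.Finite) {q : E} (hq : q ∈ convexHull ℝ V) :
    ∃ u ∈ V, ∀ (f : E →ₗ[ℝ] ℝ) (r : ℝ), (∀ z ∈ V, r ≤ f z) → f q = r → f u = r := by
  lift V to Finset E using hV
  obtain ⟨w, hw0, hw1, rfl⟩ := Finset.mem_convexHull'.mp hq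
  obtain ⟨u, hu, hwu⟩ := Finset.exists_ne_zero_of_sum_ne_zero (hw1 ▸ one_ne_zero)
  refine ⟨u, hu, fun f r hr hfq => ?_⟩
  have hsum : ∑ z ∈ V, w z * (f z - r) = 0 := by
    have hexpand : ∑ z ∈ V, w z * (f z - r) = f (∑ z ∈ V, w z • z) - (∑ z ∈ V, w z) * r := by
      simp [mul_sub, Finset.sum_sub_distrib, Finset.sum_mul]
    rw [hexpand, hfq, hw1, one_mul, sub_self]
  have hterm := (Finset.sum_eq_zero_iff_of_nonneg fun z hz =>
    mul_nonneg (hw0 z hz) (sub_nonneg.mpr (hr z hz))).mp hsum u hu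
  linarith [(mul_eq_zero.mp hterm).resolve_left hwu]

section Polyhedron

variable {ι : Type*} [Fintype ι]

def polyhedron (S : Set (ι → ℝ)) (c : (ι → ℝ) → ℝ) : Set (ι → ℝ) := {x | ∀ v ∈ S, c v ≤ x ⬝ᵥ v}

lemma isLinearMap_dotProduct_left (v : ι → ℝ) : IsLinearMap ℝ (· ⬝ᵥ v) :=
  ⟨fun x y => add_dotProduct x y v, fun r x => smul_dotProduct r x v⟩

lemma convex_polyhedron (S : Set (ι → ℝ)) (c : (ι → ℝ) → ℝ) : Convex ℝ (polyhedron S c) := by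
  simp only [polyhedron, Set.ofPred_forall]
  exact convex_iInter₂ fun v _ => convex_halfSpace_ge (isLinearMap_dotProduct_left v) _

lemma smul_polyhedron {t : ℝ} (ht : 0 < t) (S : Set (ι → ℝ)) (c : (ι → ℝ) → ℝ) :
    t • polyhedron S c = polyhedron S (t • c) := by
  ext x
  simp only [Set.mem_smul_set_iff_inv_smul_mem₀ ht.ne', polyhedron, Set.mem_ofPred_eq,
    smul_dotProduct, smul_eq_mul, Pi.smul_apply, le_inv_mul_iff₀ ht]

end Polyhedron

section HalfLattice

variable {n : ℕ}

lemma sub_mem_halfLattice {u w : Fin n → ℝ} (hu : u ∈ halfLattice n) (hw : w ∈ halfLattice n) :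
    u - w ∈ halfLattice n := by
  rcases hu with hu | hu <;> rcases hw with hw | hw <;> [left; right; right; left] <;> intro i <;>
    obtain ⟨a, ha⟩ := hu i <;> obtain ⟨b, hb⟩ := hw i <;> simp only [Pi.sub_apply, ha, hb]
  exacts [⟨a - b, by push_cast; ring⟩, ⟨a - b - 1, by push_cast; ring⟩,
    ⟨a - b, by push_cast; ring⟩, ⟨a - b, by push_cast; ring⟩]

lemma add_intCast_mem_halfLattice {u : Fin n → ℝ} (hu : u ∈ halfLattice n) (g : Fin n → ℤ) :
    u + (fun i => (g i : ℝ)) ∈ halfLattice n := by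
  rcases hu with hu | hu <;> [left; right] <;> intro i <;> obtain ⟨a, ha⟩ := hu i <;>
    exact ⟨a + g i, by simp only [Pi.add_apply, ha]; push_cast; ring⟩

lemma stdBasis_eq_single (i : Fin n) : stdBasis n i = Pi.single i 1 := by
  ext j
  simp [stdBasis, Pi.single_apply]

/-- The roots `±2 e_i` are the case `i = j`. -/
lemma exists_dotProduct_eq_of_mem_typeC {v : Fin n → ℝ} (hv : v ∈ typeC n) :
    ∃ (i j : Fin n) (ε δ : ℝ), (ε = 1 ∨ ε = -1) ∧ (δ = 1 ∨ δ = -1) ∧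
      ∀ u : Fin n → ℝ, u ⬝ᵥ v = ε * u i + δ * u j := by
  simp only [typeC, stdBasis_eq_single] at hv
  rcases hv with ⟨i, rfl | rfl⟩ | ⟨j, k, -, ε, δ, hε, hδ, rfl⟩
  · exact ⟨i, i, 1, 1, by simp, by simp, fun u => by simp [dotProduct_smul]; ring⟩
  · exact ⟨i, i, -1, -1, by simp, by simp, fun u => by simp [dotProduct_smul]; ring⟩
  · exact ⟨j, k, ε, δ, hε, hδ, fun u => by simp [dotProduct_add, dotProduct_smul]⟩

lemma exists_intCast_eq_dotProduct {u v : Fin n → ℝ} (hu : u ∈ halfLattice n)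
    (hv : v ∈ typeC n) : ∃ z : ℤ, u ⬝ᵥ v = z := by
  obtain ⟨i, j, ε, δ, hε, hδ, huv⟩ := exists_dotProduct_eq_of_mem_typeC hv
  rw [huv]
  rcases hu with hu | hu <;> obtain ⟨a, ha⟩ := hu i <;> obtain ⟨b, hb⟩ := hu j <;>
    rw [ha, hb] <;> rcases hε with rfl | rfl <;> rcases hδ with rfl | rfl
  exacts [⟨a + b, by push_cast; ring⟩, ⟨a - b, by push_cast; ring⟩,
    ⟨-a + b, by push_cast; ring⟩, ⟨-a - b, by push_cast; ring⟩,
    ⟨a + b + 1, by push_cast; ring⟩, ⟨a - b, by push_cast; ring⟩,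
    ⟨-a + b, by push_cast; ring⟩, ⟨-a - b - 1, by push_cast; ring⟩]

lemma abs_dotProduct_le_one {e v : Fin n → ℝ} (he : ∀ i, |e i| ≤ 1 / 2) (hv : v ∈ typeC n) :
    |e ⬝ᵥ v| ≤ 1 := by
  obtain ⟨i, j, ε, δ, hε, hδ, hev⟩ := exists_dotProduct_eq_of_mem_typeC hv
  have hsign : ∀ s : ℝ, (s = 1 ∨ s = -1) → |s| = 1 := by rintro s (rfl | rfl) <;> simp
  calc |e ⬝ᵥ v| ≤ |ε * e i| + |δ * e j| := hev e ▸ abs_add_le _ _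
    _ = |e i| + |e j| := by rw [abs_mul, abs_mul, hsign ε hε, hsign δ hδ, one_mul, one_mul]
    _ ≤ 1 := by linarith [he i, he j]

lemma comp_dotProduct_eq_zero {f : ℝ → ℝ} (hf : ∀ x, f (-x) = -f x) {d v : Fin n → ℝ}
    (hv : v ∈ typeC n) (hd : d ⬝ᵥ v = 0) : (f ∘ d) ⬝ᵥ v = 0 := by
  obtain ⟨i, j, ε, δ, hε, hδ, hdv⟩ := exists_dotProduct_eq_of_mem_typeC hv
  rw [hdv] at hd ⊢
  simp only [Function.comp_apply]
  rcases hε with rfl | rfl <;> rcases hδ with rfl | rfl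
  · rw [show d j = -d i by linarith, hf]; ring
  · rw [show d j = d i by linarith]; ring
  · rw [show d j = d i by linarith]; ring
  · rw [show d j = -d i by linarith, hf]; ring

lemma exists_near_mem_halfLattice {u : Fin n → ℝ} (hu : u ∈ halfLattice n) (q : Fin n → ℝ) :
    ∃ y ∈ halfLattice n, (∀ v ∈ typeC n, |(y - q) ⬝ᵥ v| ≤ 1) ∧
      ∀ v ∈ typeC n, q ⬝ᵥ v = u ⬝ᵥ v → y ⬝ᵥ v = u ⬝ᵥ v := by
  refine ⟨u + fun i => (oddRound (q i - u i) : ℝ), add_intCast_mem_halfLattice hu _,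
    fun v hv => abs_dotProduct_le_one (fun i => ?_) hv, fun v hv hqu => ?_⟩
  · convert abs_oddRound_sub_le (q i - u i) using 2
    simp only [Pi.sub_apply, Pi.add_apply]
    ring
  · have hround := comp_dotProduct_eq_zero (f := fun x => (oddRound x : ℝ))
      (fun x => by simp [oddRound_neg]) (d := q - u) hv (by rw [sub_dotProduct, hqu, sub_self])
    rw [add_dotProduct]
    exact add_eq_left.mpr hround

end HalfLattice

section LatticePolytope

variable {n : ℕ} {P V S : Set (Fin n → ℝ)}

lemma convexHull_eq_polyhedron_ceil (hVM : V ⊆ halfLattice n) (hS : S ⊆ typeC n)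
    {c : (Fin n → ℝ) → ℝ} (hVc : convexHull ℝ V = polyhedron S c) :
    convexHull ℝ V = polyhedron S (fun v => (⌈c v⌉ : ℝ)) := by
  refine (convexHull_min (fun u hu v hv => ?_) (convex_polyhedron _ _)).antisymm
    (hVc ▸ fun x hx v hv => (Int.le_ceil (c v)).trans (hx v hv))
  obtain ⟨z, hz⟩ := exists_intCast_eq_dotProduct (hVM hu) (hS hv)
  have hcu : c v ≤ u ⬝ᵥ v := (hVc ▸ subset_convexHull ℝ V hu) v hv
  rw [hz] at hcu
  show (⌈c v⌉ : ℝ) ≤ u ⬝ᵥ v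
  rw [hz]
  exact_mod_cast Int.ceil_le.mpr hcu

lemma exists_mem_sub_mem_smul (hV : V.Finite) (hVM : V ⊆ halfLattice n) (hS : S ⊆ typeC n)
    {c : (Fin n → ℝ) → ℤ} (hPV : P = convexHull ℝ V) (hPc : P = polyhedron S (fun v => (c v : ℝ)))
    {k : ℕ} (hk : 0 < k) {x : Fin n → ℝ} (hx : x ∈ halfLattice n)
    (hxk : x ∈ ((k + 1 : ℕ) : ℝ) • P) :
    ∃ y ∈ halfLattice n, y ∈ P ∧ x - y ∈ (k : ℝ) • P := by
  obtain ⟨q, hq, rfl⟩ := hxk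
  obtain ⟨u, huV, hu⟩ := exists_mem_forall_eq_of_mem_convexHull hV (hPV ▸ hq)
  obtain ⟨y, hyM, hyq, hy⟩ := exists_near_mem_halfLattice (hVM huV) q
  have hqc : ∀ v ∈ S, (c v : ℝ) ≤ q ⬝ᵥ v := by rwa [hPc] at hq
  have hxy : ∀ v, (((k + 1 : ℕ) : ℝ) • q - y) ⬝ᵥ v = (k + 1) * q ⬝ᵥ v - y ⬝ᵥ v := fun v => by
    simp only [sub_dotProduct, smul_dotProduct, smul_eq_mul]
    push_cast
    ring
  have hbounds : ∀ v ∈ S,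
      (c v : ℝ) ≤ y ⬝ᵥ v ∧ k * (c v : ℝ) ≤ (((k + 1 : ℕ) : ℝ) • q - y) ⬝ᵥ v := by
    intro v hv
    have hyqv := abs_le.mp (hyq v (hS hv))
    rw [sub_dotProduct] at hyqv
    rcases (hqc v hv).eq_or_lt with htight | hloose
    · have huv : u ⬝ᵥ v = c v := hu (IsLinearMap.mk' _ (isLinearMap_dotProduct_left v)) (c v)
        (fun z hz => (hPc ▸ hPV ▸ subset_convexHull ℝ V hz) v hv) htight.symm
      have hyv : y ⬝ᵥ v = c v := (hy v (hS hv) (htight.symm.trans huv.symm)).trans huv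
      rw [hxy, hyv, ← htight]
      exact ⟨le_rfl, le_of_eq (by ring)⟩
    · have hkq : k * (c v : ℝ) < k * q ⬝ᵥ v := mul_lt_mul_of_pos_left hloose (by exact_mod_cast hk)
      refine ⟨intCast_le_of_sub_one_lt (exists_intCast_eq_dotProduct hyM (hS hv)) (by linarith),
        ?_⟩
      have hlattice : ((k + 1 : ℕ) : ℝ) • q - y ∈ halfLattice n := sub_mem_halfLattice hx hyM
      exact_mod_cast intCast_le_of_sub_one_lt (a := k * c v)
        (exists_intCast_eq_dotProduct hlattice (hS hv)) (by rw [hxy]; push_cast; linarith)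
  refine ⟨y, hyM, hPc ▸ fun v hv => (hbounds v hv).1, ?_⟩
  rw [hPc, smul_polyhedron (by exact_mod_cast hk)]
  exact fun v hv => (hbounds v hv).2

end LatticePolytope

lemma exists_sum_eq_of_forall_exists_sub_mem_smul {E : Type*} [AddCommGroup E] [Module ℝ E]
    {L P : Set E} (hL : ∀ a ∈ L, ∀ b ∈ L, a - b ∈ L)
    (hsplit : ∀ k : ℕ, 0 < k → ∀ x ∈ L, x ∈ ((k + 1 : ℕ) : ℝ) • P →
      ∃ y ∈ L, y ∈ P ∧ x - y ∈ (k : ℝ) • P)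
    {m : ℕ} (hm : 0 < m) {x : E} (hx : x ∈ L) (hxm : x ∈ (m : ℝ) • P) :
    ∃ f : Fin m → E, (∀ j, f j ∈ L ∧ f j ∈ P) ∧ x = ∑ j, f j := by
  induction m, hm using Nat.le_induction generalizing x with
  | base => exact ⟨fun _ => x, fun _ => ⟨hx, by simpa using hxm⟩, by simp⟩
  | succ k hk ih =>
    obtain ⟨y, hyL, hyP, hxy⟩ := hsplit k hk x hx hxm
    obtain ⟨f, hf, hsum⟩ := ih (hL x hx y hyL) hxy
    refine ⟨Fin.cons y f, Fin.cases ⟨hyL, hyP⟩ hf, ?_⟩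
    rw [Fin.sum_cons, ← hsum, add_sub_cancel]

theorem typeC_polytope_normal_general (n : ℕ) (P : Set (Fin n → ℝ))
    (hpoly : ∃ V : Set (Fin n → ℝ), V.Finite ∧ V.Nonempty ∧ V ⊆ halfLattice n ∧
      P = convexHull ℝ V)
    (hcut : ∃ S : Finset (Fin n → ℝ), ↑S ⊆ typeC n ∧ ∃ c : (Fin n → ℝ) → ℝ,
      P = {x | ∀ v ∈ S, c v ≤ innerProd x v})
    (m : ℕ) (hm : 0 < m) (x : Fin n → ℝ) (hx : x ∈ halfLattice n) (hxm : x ∈ (m : ℝ) • P) :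
    ∃ f : Fin m → (Fin n → ℝ), (∀ j, f j ∈ halfLattice n ∧ f j ∈ P) ∧ x = ∑ j, f j := by
  obtain ⟨V, hV, -, hVM, hPV⟩ := hpoly
  obtain ⟨S, hS, c, hPc⟩ := hcut
  have hPc' : P = polyhedron S (fun v => (⌈c v⌉ : ℝ)) :=
    hPV.trans (convexHull_eq_polyhedron_ceil hVM hS (hPV.symm.trans hPc))
  exact exists_sum_eq_of_forall_exists_sub_mem_smul (fun a ha b hb => sub_mem_halfLattice ha hb)
    (fun k hk y hy hyk => exists_mem_sub_mem_smul hV hVM hS hPV hPc' hk hy hyk) hm hx hxm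

/-- Every lattice polytope (with respect to the dual lattice `M = ℤ^n + ℤ·(1/2,…,1/2)` of
the root lattice) cut out by the root system `C_n` is normal: every lattice point of `m·P`
is a sum of `m` lattice points of `P`. -/
theorem typeC_polytope_normal (n : ℕ) (hn : 1 ≤ n) (P : Set (Fin n → ℝ))
    (hpoly : ∃ V : Set (Fin n → ℝ), V.Finite ∧ V.Nonempty ∧ V ⊆ halfLattice n ∧
      P = convexHull ℝ V)
    (hcut : ∃ S : Finset (Fin n → ℝ), ↑S ⊆ typeC n ∧ ∃ c : (Fin n → ℝ) → ℝ,
      P = {x | ∀ v ∈ S, c v ≤ innerProd x v})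
    (m : ℕ) (hm : 0 < m) (x : Fin n → ℝ) (hx : x ∈ halfLattice n) (hxm : x ∈ (m : ℝ) • P) :
    ∃ f : Fin m → (Fin n → ℝ), (∀ j, f j ∈ halfLattice n ∧ f j ∈ P) ∧ x = ∑ j, f j :=
  typeC_polytope_normal_general n P hpoly hcut m hm x hx hxm
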